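/- arXiv:2110.01454 — 5 statements merged into one kernel-verified Lean document; each statement's English description precedes it below -/
import Mathlib

section
/- Let σ ∈ (1/2,1], α > 3, μ₀ > 0, and define μ_k = μ₀ / ((k+α-2)·ln^σ(k+α-2)) for k ≥ 1. Then for every k ≥ 1, μ₀·μ_k·(k+α-2)·ln^{1-σ}(k+α-2) - μ₀·μ_{k+1}·(k+α-1)·ln^{1-σ}(k+α-1) ≥ (2σ-1)·(k+α-1)·μ_{k+1}². -/
/-!
With `x = k + α - 2`, `a = log x`, `b = log (x + 1)` and `s = 2σ - 1 ∈ (0, 1]`, the left-hand side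
equals `μ₀² (a^(-s) - b^(-s))` and the right-hand side `μ₀² s (x + 1)⁻¹ b^(-s-1)`. Convexity of
`t ↦ t^(-s)` gives `a^(-s) - b^(-s) ≥ s (b - a) b^(-s-1)`, and `b - a ≥ (x + 1)⁻¹`.
-/

open Real

lemma one_add_mul_one_sub_le_rpow_neg {s t : ℝ} (hs0 : 0 ≤ s) (hs1 : s ≤ 1) (ht0 : 0 < t)
    (ht1 : t ≤ 1) : 1 + s * (1 - t) ≤ t ^ (-s) := by
  have hu : 0 ≤ s * (1 - t) := mul_nonneg hs0 (by linarith)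
  have hbernoulli : t ^ s ≤ 1 - s * (1 - t) := by
    have h := rpow_one_add_le_one_add_mul_self (s := t - 1) (by linarith) hs0 hs1
    rw [add_sub_cancel] at h
    linarith
  rw [rpow_neg ht0.le, ← one_div, le_div_iff₀ (rpow_pos_of_pos ht0 s)]
  nlinarith [mul_le_mul_of_nonneg_left hbernoulli (by linarith : 0 ≤ 1 + s * (1 - t))]

lemma mul_sub_mul_rpow_le_rpow_neg_sub {s a b : ℝ} (hs0 : 0 ≤ s) (hs1 : s ≤ 1) (ha : 0 < a)
    (hab : a ≤ b) : s * (b - a) * b ^ (-s - 1) ≤ a ^ (-s) - b ^ (-s) := by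
  have hb : 0 < b := ha.trans_le hab
  have key := one_add_mul_one_sub_le_rpow_neg hs0 hs1 (div_pos ha hb) ((div_le_one hb).mpr hab)
  rw [div_rpow ha.le hb.le, rpow_neg hb.le, div_inv_eq_mul] at key
  rw [rpow_sub hb, rpow_one, rpow_neg hb.le]
  calc s * (b - a) * ((b ^ s)⁻¹ / b) = (1 + s * (1 - a / b)) * (b ^ s)⁻¹ - (b ^ s)⁻¹ := by
        field_simp
        ring
    _ ≤ a ^ (-s) * b ^ s * (b ^ s)⁻¹ - (b ^ s)⁻¹ := by gcongr
    _ = a ^ (-s) - (b ^ s)⁻¹ := by field_simp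

lemma inv_add_one_le_log_add_one_sub_log {x : ℝ} (hx : 0 < x) :
    (x + 1)⁻¹ ≤ log (x + 1) - log x := by
  have h := one_sub_inv_le_log_of_pos (div_pos (by linarith : 0 < x + 1) hx)
  rw [log_div (by linarith) hx.ne', inv_div] at h
  calc (x + 1)⁻¹ = 1 - x / (x + 1) := by field_simp; ring
    _ ≤ _ := h

lemma mul_div_mul_rpow_mul_rpow_one_sub (c σ : ℝ) {y L : ℝ} (hy : y ≠ 0) (hL : 0 < L) :
    c * (c / (y * L ^ σ)) * y * L ^ (1 - σ) = c ^ 2 * L ^ (-(2 * σ - 1)) := by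
  have hsplit : L ^ (1 - σ) = L ^ (-(2 * σ - 1)) * L ^ σ := by
    rw [← rpow_add hL]
    ring_nf
  rw [hsplit]
  field_simp

lemma mul_mul_div_mul_rpow_sq (c σ : ℝ) {y L : ℝ} (hy : y ≠ 0) (hL : 0 < L) :
    (2 * σ - 1) * y * (c / (y * L ^ σ)) ^ 2 =
      c ^ 2 * ((2 * σ - 1) * y⁻¹ * L ^ (-(2 * σ - 1) - 1)) := by
  have hpow : L ^ (-(2 * σ - 1) - 1) = ((L ^ σ) ^ 2)⁻¹ := by
    rw [← rpow_natCast, ← rpow_mul hL.le, ← rpow_neg hL.le]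
    congr 1
    push_cast
    ring
  rw [hpow]
  field_simp

theorem stmt_4_general (σ α μ₀ : ℝ) (hσ : σ ∈ Set.Ioc (1/2 : ℝ) 1) (hα : 3 < α)
    (μ : ℕ → ℝ)
    (hμ : ∀ k : ℕ, 1 ≤ k → μ k = μ₀ / (((k : ℝ) + α - 2) * Real.log ((k : ℝ) + α - 2) ^ σ))
    (k : ℕ) (hk : 1 ≤ k) :
    μ₀ * μ k * ((k : ℝ) + α - 2) * Real.log ((k : ℝ) + α - 2) ^ (1 - σ) -
        μ₀ * μ (k + 1) * ((k : ℝ) + α - 1) * Real.log ((k : ℝ) + α - 1) ^ (1 - σ) ≥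
      (2 * σ - 1) * ((k : ℝ) + α - 1) * μ (k + 1) ^ 2 := by
  obtain ⟨hσ₁, hσ₂⟩ := hσ
  set x : ℝ := (k : ℝ) + α - 2
  have hx : 1 < x := by
    have : (1 : ℝ) ≤ k := by exact_mod_cast hk
    linarith
  have hμk₁ : μ (k + 1) = μ₀ / ((x + 1) * log (x + 1) ^ σ) := by
    have hcast : ((k + 1 : ℕ) : ℝ) + α - 2 = x + 1 := by push_cast; ring
    rw [hμ (k + 1) (by omega), hcast]
  have hx₁ : (k : ℝ) + α - 1 = x + 1 := by ring
  have ha : 0 < log x := log_pos hx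
  have hab : log x ≤ log (x + 1) := log_le_log (by linarith) (by linarith)
  have hb : 0 < log (x + 1) := ha.trans_le hab
  rw [hμ k hk, hμk₁, hx₁, mul_div_mul_rpow_mul_rpow_one_sub _ _ (by positivity) ha,
    mul_div_mul_rpow_mul_rpow_one_sub _ _ (by positivity) hb,
    mul_mul_div_mul_rpow_sq _ _ (by positivity) hb, ge_iff_le, ← mul_sub]
  gcongr μ₀ ^ 2 * ?_
  calc (2 * σ - 1) * (x + 1)⁻¹ * log (x + 1) ^ (-(2 * σ - 1) - 1)
      ≤ (2 * σ - 1) * (log (x + 1) - log x) * log (x + 1) ^ (-(2 * σ - 1) - 1) := by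
        have := inv_add_one_le_log_add_one_sub_log (x := x) (by linarith)
        gcongr
        linarith
    _ ≤ _ := mul_sub_mul_rpow_le_rpow_neg_sub (by linarith) (by linarith) ha hab

theorem stmt_4 (σ α μ₀ : ℝ) (hσ : σ ∈ Set.Ioc (1/2 : ℝ) 1) (hα : 3 < α) (hμ₀ : 0 < μ₀)
    (μ : ℕ → ℝ)
    (hμ : ∀ k : ℕ, 1 ≤ k → μ k = μ₀ / (((k : ℝ) + α - 2) * Real.log ((k : ℝ) + α - 2) ^ σ))
    (k : ℕ) (hk : 1 ≤ k) :
    μ₀ * μ k * ((k : ℝ) + α - 2) * Real.log ((k : ℝ) + α - 2) ^ (1 - σ) -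
        μ₀ * μ (k + 1) * ((k : ℝ) + α - 1) * Real.log ((k : ℝ) + α - 1) ^ (1 - σ) ≥
      (2 * σ - 1) * ((k : ℝ) + α - 1) * μ (k + 1) ^ 2 :=
  stmt_4_general σ α μ₀ hσ hα μ hμ k hk
end

section
/- Let α ≥ 3 and let {a_k}, {ω_k} be sequences of nonnegative real numbers satisfying a_{k+1} ≤ ((k-1)/(k+α-1))·a_k + ω_k for all k ≥ 1. If ∑_{k=1}^∞ k·ω_k < ∞, then ∑_{k=1}^∞ a_k < ∞. -/
theorem stmt_7 (α : ℝ) (hα : 3 ≤ α) (a ω : ℕ → ℝ)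
    (ha : ∀ k, 0 ≤ a k) (hω : ∀ k, 0 ≤ ω k)
    (hrec : ∀ k : ℕ, 1 ≤ k → a (k + 1) ≤ (((k : ℝ) - 1) / ((k : ℝ) + α - 1)) * a k + ω k)
    (hsum : Summable (fun k : ℕ => (k : ℝ) * ω k)) :
    Summable a := by
  have hα1 : (0:ℝ) < α - 1 := by linarith
  set T := ∑' k : ℕ, (k:ℝ) * ω k with hTdef
  have hT : ∀ n, ∑ k ∈ Finset.range n, (k:ℝ) * ω k ≤ T := fun n =>
    Summable.sum_le_tsum (Finset.range n)
      (fun i _ => mul_nonneg (Nat.cast_nonneg i) (hω i)) hsum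
  have key : ∀ n : ℕ, 1 ≤ n →
      ((n:ℝ)+α-1) * a (n+1) + (α-1) * ∑ k ∈ Finset.Ico 2 (n+1), a k ≤
        ∑ k ∈ Finset.Ico 1 (n+1), ((k:ℝ)+α-1) * ω k := by
    intro n hn
    induction n with
    | zero => omega
    | succ m ih =>
      rcases Nat.lt_or_ge m 1 with hm | hm
      · -- m = 0, base case n = 1
        interval_cases m
        have h := hrec 1 le_rfl
        norm_num at h
        simp [Finset.Ico_self, Finset.sum_Ico_eq_sum_range]
        nlinarith [mul_le_mul_of_nonneg_left h (by linarith : (0:ℝ) ≤ α)]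
      · have ihm := ih hm
        have h := hrec (m+1) (Nat.le_add_left 1 m)
        push_cast at h
        have hm0 : (0:ℝ) ≤ (m:ℝ) := Nat.cast_nonneg m
        have hc : (0:ℝ) < (m:ℝ) + α := by linarith
        have e : ((m:ℝ)+1-1)/((m:ℝ)+1+α-1) = (m:ℝ)/((m:ℝ)+α) := by ring_nf
        rw [e] at h
        have h2 := mul_le_mul_of_nonneg_left h hc.le
        have e2 : ((m:ℝ)+α) * ((m:ℝ)/((m:ℝ)+α) * a (m+1) + ω (m+1)) =
            (m:ℝ) * a (m+1) + ((m:ℝ)+α) * ω (m+1) := by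
          field_simp
        rw [e2] at h2
        rw [Finset.sum_Ico_succ_top (by omega : 2 ≤ m+1),
          Finset.sum_Ico_succ_top (by omega : 1 ≤ m+1)]
        push_cast
        linarith
  have hbound : ∀ n, ∑ k ∈ Finset.range n, a k ≤ a 0 + a 1 + α * T / (α-1) := by
    intro n
    have hTnn : 0 ≤ T := by simpa using hT 0
    rcases Nat.lt_or_ge n 2 with hn | hn
    · interval_cases n
      · simp
        nlinarith [ha 0, ha 1, (by positivity : (0:ℝ) ≤ α * T / (α-1))]
      · simp
        nlinarith [ha 0, ha 1, (by positivity : (0:ℝ) ≤ α * T / (α-1))]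
    · -- n ≥ 2
      obtain ⟨m, rfl⟩ : ∃ m, n = m + 2 := ⟨n - 2, by omega⟩
      have hkey := key (m+1) (by omega)
      have hsplit : ∑ k ∈ Finset.range (m+2), a k =
          a 0 + a 1 + ∑ k ∈ Finset.Ico 2 (m+2), a k := by
        have hcons := Finset.sum_Ico_consecutive a (by omega : 0 ≤ 2) (by omega : 2 ≤ m+2)
        rw [Finset.range_eq_Ico, ← hcons]
        norm_num [Finset.sum_Ico_eq_sum_range, Finset.sum_range_succ]
      rw [hsplit]
      have hω2 : ∑ k ∈ Finset.Ico 1 (m+2), ((k:ℝ)+α-1) * ω k ≤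
          α * ∑ k ∈ Finset.Ico 1 (m+2), (k:ℝ) * ω k := by
        rw [Finset.mul_sum]
        apply Finset.sum_le_sum
        intro i hi
        have hi1 : 1 ≤ i := (Finset.mem_Ico.mp hi).1
        have : ((i:ℝ)+α-1) ≤ α * i := by
          have : (1:ℝ) ≤ (i:ℝ) := by exact_mod_cast hi1
          nlinarith
        nlinarith [hω i, mul_le_mul_of_nonneg_right this (hω i)]
      have hω3 : ∑ k ∈ Finset.Ico 1 (m+2), (k:ℝ) * ω k ≤ T := by
        have : ∑ k ∈ Finset.Ico 1 (m+2), (k:ℝ) * ω k =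
            ∑ k ∈ Finset.range (m+2), (k:ℝ) * ω k := by
          have hcons := Finset.sum_Ico_consecutive (fun k : ℕ => (k:ℝ) * ω k) (by omega : 0 ≤ 1) (by omega : 1 ≤ m+2)
          rw [Finset.range_eq_Ico, ← hcons]
          simp
        rw [this]; exact hT (m+2)
      have hann : 0 ≤ ((m+1:ℝ)+α-1) * a (m+2) := by
        have : (0:ℝ) ≤ (m:ℝ) := Nat.cast_nonneg m
        have := ha (m+2)
        nlinarith
      push_cast at hkey
      have h4 : (α-1) * ∑ k ∈ Finset.Ico 2 (m+2), a k ≤ α * T := by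
        nlinarith [mul_le_mul_of_nonneg_left hω3 (by linarith : (0:ℝ) ≤ α)]
      have h5 : ∑ k ∈ Finset.Ico 2 (m+2), a k ≤ α * T / (α-1) := by
        rw [le_div_iff₀ hα1]
        linarith [h4]
      linarith
  exact summable_of_sum_range_le ha hbound
end

section
/- Let S be a nonempty subset of ℝⁿ and {z_k} a sequence in ℝⁿ such that (i) for every z ∈ S, lim_{k→∞} ‖z_k - z‖ exists, and (ii) every cluster point of {z_k} belongs to S. Then {z_k} converges to a point of S. -/
theorem stmt_8 (n : ℕ) (S : Set (EuclideanSpace ℝ (Fin n))) (hS : S.Nonempty)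
    (z : ℕ → EuclideanSpace ℝ (Fin n))
    (h1 : ∀ s ∈ S, ∃ l : ℝ, Filter.Tendsto (fun k => ‖z k - s‖) Filter.atTop (nhds l))
    (h2 : ∀ p : EuclideanSpace ℝ (Fin n),
      (∃ φ : ℕ → ℕ, StrictMono φ ∧ Filter.Tendsto (z ∘ φ) Filter.atTop (nhds p)) → p ∈ S) :
    ∃ p ∈ S, Filter.Tendsto z Filter.atTop (nhds p) := by
  obtain ⟨s, hs⟩ := hS
  obtain ⟨l0, hl0⟩ := h1 s hs
  -- the sequence is bounded
  obtain ⟨C, hC⟩ := hl0.bddAbove_range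
  have hmem : ∀ k, z k ∈ Metric.closedBall s C := by
    intro k
    rw [Metric.mem_closedBall, dist_eq_norm]
    exact hC ⟨k, rfl⟩
  obtain ⟨p, -, φ, hφmono, hφtendsto⟩ :=
    (isCompact_closedBall s C).tendsto_subseq hmem
  have hpS : p ∈ S := h2 p ⟨φ, hφmono, hφtendsto⟩
  obtain ⟨l, hl⟩ := h1 p hpS
  have hsub : Filter.Tendsto (fun k => ‖z (φ k) - p‖) Filter.atTop (nhds l) :=
    hl.comp (hφmono.tendsto_atTop)
  have hsub0 : Filter.Tendsto (fun k => ‖z (φ k) - p‖) Filter.atTop (nhds 0) := by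
    have := (tendsto_iff_norm_sub_tendsto_zero).mp hφtendsto
    simpa [Function.comp] using this
  have hl0' : l = 0 := tendsto_nhds_unique hsub hsub0
  subst hl0'
  exact ⟨p, hpS, (tendsto_iff_norm_sub_tendsto_zero).mpr hl⟩
end

section
/- Let {a_k}_{k≥1} be a sequence of nonnegative numbers, c ≥ 0, and {β_j}_{j≥1} a summable sequence of nonnegative numbers such that a_k² ≤ c² + ∑_{j=1}^k β_j·a_j for all k ≥ 1. Then a_k ≤ c + ∑_{j=1}^∞ β_j for all k ≥ 1. -/
theorem stmt_9 (a β : ℕ → ℝ) (c : ℝ) (hc : 0 ≤ c)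
    (ha : ∀ k, 0 ≤ a k) (hβ : ∀ j, 0 ≤ β j) (hβs : Summable β)
    (h : ∀ k : ℕ, 1 ≤ k → a k ^ 2 ≤ c ^ 2 + ∑ j ∈ Finset.Icc 1 k, β j * a j) :
    ∀ k : ℕ, 1 ≤ k → a k ≤ c + ∑' j : ℕ, β (j + 1) := by
  intro k hk
  set B : ℝ := ∑' j : ℕ, β (j + 1) with hB
  have hβs' : Summable (fun j : ℕ => β (j + 1)) := (summable_nat_add_iff 1).mpr hβs
  have hBnn : 0 ≤ B := tsum_nonneg fun j => hβ _
  have hne : (Finset.Icc 1 k).Nonempty := ⟨1, by simp [hk]⟩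
  obtain ⟨j0, hj0mem, hj0max⟩ := (Finset.Icc 1 k).exists_max_image a hne
  set M : ℝ := a j0 with hM
  have hMnn : 0 ≤ M := ha _
  have hkM : a k ≤ M := hj0max k (by simp [hk])
  obtain ⟨hj01, hj0k⟩ := Finset.mem_Icc.mp hj0mem
  -- sum of β over Icc 1 j0 is ≤ B
  have hsumβ : ∑ j ∈ Finset.Icc 1 j0, β j ≤ B := by
    have h1 : ∑ j ∈ Finset.Icc 1 j0, β j = ∑ i ∈ Finset.range j0, β (i + 1) := by
      rw [← Finset.Ico_add_one_right_eq_Icc, Finset.sum_Ico_eq_sum_range]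
      simp [add_comm]
    rw [h1, hB]
    exact Summable.sum_le_tsum _ (fun i _ => hβ _) hβs'
  have hquad : M ^ 2 ≤ c ^ 2 + B * M := by
    have h0 := h j0 hj01
    have hle : ∑ j ∈ Finset.Icc 1 j0, β j * a j ≤ ∑ j ∈ Finset.Icc 1 j0, β j * M := by
      refine Finset.sum_le_sum fun j hj => ?_
      have hjk : j ∈ Finset.Icc 1 k := by
        rw [Finset.mem_Icc] at hj ⊢
        exact ⟨hj.1, hj.2.trans hj0k⟩
      exact mul_le_mul_of_nonneg_left (hj0max j hjk) (hβ j)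
    have : ∑ j ∈ Finset.Icc 1 j0, β j * M ≤ B * M := by
      rw [← Finset.sum_mul]
      exact mul_le_mul_of_nonneg_right hsumβ hMnn
    nlinarith
  have hMle : M ≤ c + B := by nlinarith [mul_nonneg hc hBnn]
  exact hkM.trans hMle
end

section
/- Let {h_k}_{k≥0} be a sequence of nonnegative reals, α ≥ 3, {d_k} and {e_k} nonnegative sequences with ∑_{k≥1} k·d_k < ∞ and ∑_{k≥1} k·e_k < ∞, satisfying (h_{k+1}-h_k)_+ ≤ ((k-1)/(k+α-1))·(h_k-h_{k-1})_+ + d_k + e_k for all k ≥ 1. Then lim_{k→∞} h_k exists. -/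
theorem stmt_13 (α : ℝ) (hα : 3 ≤ α) (h d e : ℕ → ℝ)
    (hh : ∀ k, 0 ≤ h k) (hd : ∀ k, 0 ≤ d k) (he : ∀ k, 0 ≤ e k)
    (hds : Summable (fun k : ℕ => (k : ℝ) * d k))
    (hes : Summable (fun k : ℕ => (k : ℝ) * e k))
    (hrec : ∀ k : ℕ, 1 ≤ k →
      max (h (k + 1) - h k) 0 ≤
        (((k : ℝ) - 1) / ((k : ℝ) + α - 1)) * max (h k - h (k - 1)) 0 + d k + e k) :
    ∃ l : ℝ, Filter.Tendsto h Filter.atTop (nhds l) := by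
  set a : ℕ → ℝ := fun k => max (h (k + 1) - h k) 0 with ha
  have ha0 : ∀ k, 0 ≤ a k := fun k => le_max_right _ _
  set w : ℕ → ℝ := fun k => d k + e k with hw
  have hw0 : ∀ k, 0 ≤ w k := fun k => add_nonneg (hd k) (he k)
  have hws : Summable (fun k : ℕ => (k : ℝ) * w k) := by
    have := hds.add hes
    simpa [hw, mul_add] using this
  set T : ℝ := ∑' k : ℕ, (k : ℝ) * w k with hT
  -- key inequality
  have key : ∀ N : ℕ, ((N : ℝ) + 3) * a (N + 1) ≤ (N : ℝ) * a N + α * (((N : ℝ) + 1) * w (N + 1)) := by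
    intro N
    have h1 := hrec (N + 1) (by omega)
    have hcast : (((N + 1 : ℕ) : ℝ) - 1) / (((N + 1 : ℕ) : ℝ) + α - 1) = (N : ℝ) / ((N : ℝ) + α) := by
      push_cast; ring_nf
    have hsimp : (N + 1) - 1 = N := by omega
    rw [hcast, hsimp] at h1
    have h1' : a (N + 1) ≤ (N : ℝ) / ((N : ℝ) + α) * a N + w (N + 1) := by
      simp only [ha, hw]; linarith [h1]
    have hpos : (0 : ℝ) < (N : ℝ) + α := by positivity
    have h2 : ((N : ℝ) + α) * a (N + 1) ≤ (N : ℝ) * a N + ((N : ℝ) + α) * w (N + 1) := by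
      have hmm := mul_le_mul_of_nonneg_left h1' hpos.le
      have hc : ((N : ℝ) + α) * ((N : ℝ) / ((N : ℝ) + α) * a N) = (N : ℝ) * a N := by
        field_simp
      rw [mul_add, hc] at hmm
      linarith
    have h3 : ((N : ℝ) + 3) * a (N + 1) ≤ ((N : ℝ) + α) * a (N + 1) :=
      mul_le_mul_of_nonneg_right (by linarith) (ha0 _)
    have h4 : ((N : ℝ) + α) * w (N + 1) ≤ α * (((N : ℝ) + 1) * w (N + 1)) := by
      have : (N : ℝ) + α ≤ α * ((N : ℝ) + 1) := by nlinarith [Nat.cast_nonneg (α := ℝ) N]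
      nlinarith [hw0 (N + 1)]
    linarith
  -- telescoping bound
  have tele : ∀ N : ℕ, ((N : ℝ) + 1) * a N + ∑ k ∈ Finset.range (N + 1), a k ≤
      2 * a 0 + ∑ k ∈ Finset.range (N + 1), α * ((k : ℝ) * w k) := by
    intro N
    induction N with
    | zero => simp; linarith [ha0 0]
    | succ n ih =>
      have hk := key n
      rw [Finset.sum_range_succ, Finset.sum_range_succ (f := fun k => α * ((k : ℝ) * w k))]
      push_cast
      have han := ha0 n
      have han1 := ha0 (n + 1)
      have hnn : (0 : ℝ) ≤ (n : ℝ) := Nat.cast_nonneg n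
      push_cast at ih hk
      linarith
  have Tge : ∀ N : ℕ, ∑ k ∈ Finset.range N, (k : ℝ) * w k ≤ T := by
    intro N
    exact Summable.sum_le_tsum _ (fun k _ => mul_nonneg (Nat.cast_nonneg k) (hw0 k)) hws
  have hbound : ∀ n : ℕ, ∑ k ∈ Finset.range n, a k ≤ 2 * a 0 + α * T := by
    intro n
    have hmono : ∑ k ∈ Finset.range n, a k ≤ ∑ k ∈ Finset.range (n + 1), a k := by
      apply Finset.sum_le_sum_of_subset_of_nonneg (Finset.range_subset_range.2 (by omega))
      intro i _ _; exact ha0 i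
    have := tele n
    have hS : 0 ≤ ((n : ℝ) + 1) * a n := by positivity
    have hTα : ∑ k ∈ Finset.range (n + 1), α * ((k : ℝ) * w k) ≤ α * T := by
      rw [← Finset.mul_sum]
      have := Tge (n + 1)
      nlinarith
    linarith
  have hasum : Summable a := summable_of_sum_range_le ha0 hbound
  -- convergence of h
  set A : ℕ → ℝ := fun n => ∑ k ∈ Finset.range n, a k with hA
  have hAtend : Filter.Tendsto A Filter.atTop (nhds (∑' k, a k)) := hasum.hasSum.tendsto_sum_nat
  have hganti : Antitone (fun n => h n - A n) := by
    apply antitone_nat_of_succ_le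
    intro n
    have : h (n + 1) - h n ≤ a n := le_max_left _ _
    have hAn : A (n + 1) = A n + a n := Finset.sum_range_succ _ _
    simp only [hAn]
    linarith
  have hgbdd : ∀ n, -(2 * a 0 + α * T) ≤ h n - A n := by
    intro n
    have := hbound n
    have := hh n
    simp only [hA]
    linarith
  rcases tendsto_of_antitone hganti with hbot | ⟨l, hl⟩
  · exfalso
    have := (Filter.tendsto_atTop_atBot.1 hbot) (-(2 * a 0 + α * T) - 1)
    obtain ⟨n, hn⟩ := this
    have := hn n le_rfl
    have := hgbdd n
    linarith
  · refine ⟨l + ∑' k, a k, ?_⟩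
    have : Filter.Tendsto (fun n => (h n - A n) + A n) Filter.atTop (nhds (l + ∑' k, a k)) :=
      hl.add hAtend
    simpa using this
end
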